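/- arXiv:1610.09211 — 3 statements merged into one kernel-verified Lean document; each statement's English description precedes it below -/
import Mathlib

section
/- Let $\omega \subset \mathbb{R}^2$ be a bounded open set, $\overline{x} \in \partial\omega$, and assume $\omega$ satisfies an exterior cone condition at $\overline{x}$: there exist a rotation $Q \in SO(2)$ and a constant $c > 0$ such that $\overline{x} + Q K \subset \mathbb{R}^2 \setminus \overline{\omega}$, where $K = \{(x_1,x_2) \in \mathbb{R}^2 : 0 < x_2 < c|x_1|\}$. Then there exists $C > 0$ depending only on $c$ such that $\left\|\frac{u}{\operatorname{dist}(\cdot,\overline{x})}\right\|_{L^2(\omega)} \le C \|\nabla u\|_{L^2(\omega)}$ for all $u \in H^1_0(\omega)$. -/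
open MeasureTheory Real Set Metric

noncomputable section

abbrev E2 := EuclideanSpace ℝ (Fin 2)

open scoped ENNReal

-- lintegral polar coordinates (real product version)
theorem my_lintegral_polar (f : ℝ × ℝ → ℝ≥0∞) :
    (∫⁻ p in polarCoord.target, ENNReal.ofReal p.1 * f (polarCoord.symm p)) = ∫⁻ p, f p := by
  set B : ℝ × ℝ → ℝ × ℝ →L[ℝ] ℝ × ℝ := fun p =>
    LinearMap.toContinuousLinearMap (Matrix.toLin (Module.Basis.finTwoProd ℝ) (Module.Basis.finTwoProd ℝ)
      !![Real.cos p.2, -p.1 * Real.sin p.2; Real.sin p.2, p.1 * Real.cos p.2]) with hB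
  have A : ∀ p ∈ polarCoord.target, HasFDerivWithinAt polarCoord.symm (B p) polarCoord.target p :=
    fun p _ => (hasFDerivAt_polarCoord_symm p).hasFDerivWithinAt
  have B_det : ∀ p, (B p).det = p.1 := by
    intro p
    conv_rhs => rw [← one_mul p.1, ← cos_sq_add_sin_sq p.2]
    simp only [hB, neg_mul, LinearMap.det_toContinuousLinearMap, LinearMap.det_toLin,
      Matrix.det_fin_two_of, sub_neg_eq_add]
    ring
  have hinj : Set.InjOn polarCoord.symm polarCoord.target := by
    have := polarCoord.symm.injOn
    rwa [OpenPartialHomeomorph.symm_source] at this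
  have himg : polarCoord.symm '' polarCoord.target = polarCoord.source := by
    rw [← polarCoord.symm_source, ← polarCoord.symm_target]
    exact polarCoord.symm.image_source_eq_target
  calc
    ∫⁻ p in polarCoord.target, ENNReal.ofReal p.1 * f (polarCoord.symm p)
        = ∫⁻ p in polarCoord.target, ENNReal.ofReal |(B p).det| * f (polarCoord.symm p) := by
          refine setLIntegral_congr_fun polarCoord.open_target.measurableSet ?_
          exact fun p hp => by
            rw [B_det, abs_of_pos hp.1]
    _ = ∫⁻ p in polarCoord.symm '' polarCoord.target, f p :=
          (lintegral_image_eq_lintegral_abs_det_fderiv_mul volume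
            polarCoord.open_target.measurableSet A hinj f).symm
    _ = ∫⁻ p in polarCoord.source, f p := by rw [himg]
    _ = ∫⁻ p, f p := by
          exact (setLIntegral_congr polarCoord_source_ae_eq_univ).trans
            (setLIntegral_univ _)

theorem my_lintegral_polar_complex (f : ℂ → ℝ≥0∞) (hf : Measurable f) :
    (∫⁻ p in polarCoord.target, ENNReal.ofReal p.1 * f (Complex.polarCoord.symm p)) =
      ∫⁻ z, f z := by
  rw [← (MeasurePreserving.symm _ Complex.volume_preserving_equiv_real_prod).lintegral_comp hf]
  rw [← my_lintegral_polar (fun p => f (Complex.measurableEquivRealProd.symm p))]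
  rfl

theorem my_tonelli (f : ℝ × ℝ → ℝ≥0∞) (hf : Measurable f) :
    ∫⁻ p in polarCoord.target, f p
      = ∫⁻ r in Ioi (0:ℝ), ∫⁻ θ in Ioo (-π) π, f (r, θ) := by
  rw [polarCoord_target, Measure.volume_eq_prod, ← Measure.prod_restrict,
    lintegral_prod _ hf.aemeasurable]

theorem my_wirtinger (g D : ℝ → ℝ) (hg : ∀ t, HasDerivAt g (D t) t) (hD : Continuous D)
    (θ₀ θ : ℝ) (hθ₀ : θ₀ ∈ Icc (-π) π) (hθ : θ ∈ Icc (-π) π) (h0 : g θ₀ = 0) :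
    g θ ^ 2 ≤ (2 * π) * ∫ t in Ioc (-π) π, D t ^ 2 := by
  have hDabsint : IntegrableOn (fun t => |D t|) (Ioc (-π) π) :=
    (hD.abs.integrableOn_Ioc)
  have hftc : g θ = ∫ t in θ₀..θ, D t := by
    rw [intervalIntegral.integral_eq_sub_of_hasDerivAt (fun t _ => hg t)
      (hD.intervalIntegrable _ _), h0, sub_zero]
  have habs : |g θ| ≤ ∫ t in Ioc (-π) π, |D t| := by
    rcases le_total θ₀ θ with h | h
    · calc |g θ| = |∫ t in θ₀..θ, D t| := by rw [hftc]
        _ ≤ ∫ t in θ₀..θ, |D t| := intervalIntegral.abs_integral_le_integral_abs h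
        _ = ∫ t in Ioc θ₀ θ, |D t| := intervalIntegral.integral_of_le h
        _ ≤ ∫ t in Ioc (-π) π, |D t| := by
            refine setIntegral_mono_set hDabsint ?_ ?_
            · exact Filter.Eventually.of_forall fun t => abs_nonneg _
            · exact (Ioc_subset_Ioc hθ₀.1 hθ.2).eventuallyLE
    · calc |g θ| = |∫ t in θ..θ₀, D t| := by
            rw [hftc, intervalIntegral.integral_symm, abs_neg]
        _ ≤ ∫ t in θ..θ₀, |D t| := intervalIntegral.abs_integral_le_integral_abs h
        _ = ∫ t in Ioc θ θ₀, |D t| := intervalIntegral.integral_of_le h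
        _ ≤ ∫ t in Ioc (-π) π, |D t| := by
            refine setIntegral_mono_set hDabsint ?_ ?_
            · exact Filter.Eventually.of_forall fun t => abs_nonneg _
            · exact (Ioc_subset_Ioc hθ.1 hθ₀.2).eventuallyLE
  -- Cauchy-Schwarz
  set μ : Measure ℝ := volume.restrict (Ioc (-π) π) with hμ
  haveI : IsFiniteMeasure μ := ⟨by rw [hμ, Measure.restrict_apply_univ]; exact measure_Ioc_lt_top⟩
  have hpq : (2:ℝ).HolderConjugate 2 := Real.HolderConjugate.two_two
  obtain ⟨M, hM⟩ := (isCompact_Icc (a := -π) (b := π)).exists_bound_of_continuousOn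
    hD.continuousOn
  have hmem : MemLp (fun t => |D t|) (ENNReal.ofReal 2) μ := by
    refine MemLp.of_bound hD.abs.aestronglyMeasurable M ?_
    rw [hμ]
    refine (ae_restrict_iff' measurableSet_Ioc).2 (Filter.Eventually.of_forall fun t ht => ?_)
    rw [Real.norm_eq_abs, abs_abs]
    calc |D t| = ‖D t‖ := rfl
      _ ≤ M := hM t (Ioc_subset_Icc_self ht)
  have hcs := integral_mul_le_Lp_mul_Lq_of_nonneg (μ := μ) hpq
    (Filter.Eventually.of_forall fun t => abs_nonneg (D t))
    (Filter.Eventually.of_forall fun t => zero_le_one)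
    hmem (memLp_const 1)
  simp only [mul_one, one_rpow] at hcs
  have hA0 : 0 ≤ ∫ t in Ioc (-π) π, D t ^ 2 :=
    setIntegral_nonneg measurableSet_Ioc fun t _ => sq_nonneg _
  have habs2 : ∀ t : ℝ, |D t| ^ (2:ℝ) = D t ^ 2 := fun t => by
    rw [show (2:ℝ) = ((2:ℕ):ℝ) by norm_num, Real.rpow_natCast, sq_abs]
  have hμuniv : ∫ (_ : ℝ), (1:ℝ) ∂μ = 2 * π := by
    rw [integral_const, smul_eq_mul, mul_one, hμ, measureReal_def, Measure.restrict_apply_univ,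
      Real.volume_Ioc, ENNReal.toReal_ofReal (by linarith [pi_pos])]
    ring
  rw [hμuniv] at hcs
  simp only [habs2] at hcs
  have key : |g θ| ≤ (∫ t in Ioc (-π) π, D t ^ 2) ^ (1/2 : ℝ) * (2 * π) ^ (1/2 : ℝ) :=
    habs.trans hcs
  have h2π : (0:ℝ) ≤ 2 * π := by positivity
  calc g θ ^ 2 = |g θ| ^ 2 := (sq_abs _).symm
    _ ≤ ((∫ t in Ioc (-π) π, D t ^ 2) ^ (1/2:ℝ) * (2 * π) ^ (1/2:ℝ)) ^ 2 := by
        refine pow_le_pow_left₀ (abs_nonneg _) key 2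
    _ = (2 * π) * ∫ t in Ioc (-π) π, D t ^ 2 := by
        rw [mul_pow, ← Real.rpow_natCast (_ ^ (1/2:ℝ)) 2, ← Real.rpow_natCast ((2*π) ^ (1/2:ℝ)) 2,
          ← Real.rpow_mul hA0, ← Real.rpow_mul h2π]
        norm_num
        rw [mul_comm]

theorem my_slice (u : E2 → ℝ) (hu : ContDiff ℝ 1 u) (xbar : E2) (θ₀ : ℝ)
    (hθ₀ : θ₀ ∈ Icc (-π) π)
    (hvan : ∀ r : ℝ, 0 < r →
      u (xbar + Complex.orthonormalBasisOneI.repr ((r : ℂ) * Complex.exp (θ₀ * Complex.I))) = 0)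
    (r : ℝ) (hr : 0 < r) :
    ∫⁻ θ in Ioo (-π) π, ENNReal.ofReal r * ENNReal.ofReal
        ((u (xbar + Complex.orthonormalBasisOneI.repr ((r:ℂ) * Complex.exp ((θ:ℂ) * Complex.I))) /
          dist (xbar + Complex.orthonormalBasisOneI.repr
            ((r:ℂ) * Complex.exp ((θ:ℂ) * Complex.I))) xbar) ^ 2)
      ≤ ENNReal.ofReal (4 * π ^ 2) *
        ∫⁻ θ in Ioo (-π) π, ENNReal.ofReal r * ENNReal.ofReal
          (‖gradient u (xbar + Complex.orthonormalBasisOneI.repr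
            ((r:ℂ) * Complex.exp ((θ:ℂ) * Complex.I)))‖ ^ 2) := by
  set b := Complex.orthonormalBasisOneI with hb
  set L : ℂ →L[ℝ] E2 := b.repr.toContinuousLinearEquiv.toContinuousLinearMap with hL
  have hLapp : ∀ z : ℂ, L z = b.repr z := fun z => rfl
  set ψ : ℝ → ℂ := fun θ => (r:ℂ) * Complex.exp ((θ:ℂ) * Complex.I) with hψdef
  set φ : ℝ → E2 := fun θ => xbar + b.repr (ψ θ) with hφdef
  set g : ℝ → ℝ := fun θ => u (φ θ) with hgdef
  set v : ℝ → E2 := fun θ => b.repr ((r:ℂ) * Complex.exp ((θ:ℂ) * Complex.I) * Complex.I)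
    with hvdef
  set D : ℝ → ℝ := fun θ => (fderiv ℝ u (φ θ)) (v θ) with hDdef
  have hψcont : Continuous ψ := by
    exact continuous_const.mul (Complex.continuous_exp.comp
      ((Complex.continuous_ofReal).mul continuous_const))
  have hψ' : ∀ θ : ℝ, HasDerivAt ψ ((r:ℂ) * Complex.exp ((θ:ℂ) * Complex.I) * Complex.I) θ := by
    intro θ
    have h1 : HasDerivAt (fun t : ℝ => (t:ℂ) * Complex.I) Complex.I θ := by
      simpa using (Complex.ofRealCLM.hasDerivAt (x := θ)).mul_const Complex.I
    have h2 := h1.cexp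
    simpa [mul_assoc] using h2.const_mul (r:ℂ)
  have hφ' : ∀ θ : ℝ, HasDerivAt φ (v θ) θ := by
    intro θ
    have hLd : HasFDerivAt (fun z => xbar + b.repr z) L (ψ θ) := by
      have := L.hasFDerivAt (x := ψ θ)
      have h2 := this.const_add xbar
      simpa [hLapp] using h2
    have := hLd.comp_hasDerivAt θ (hψ' θ)
    exact this
  have hφcont : Continuous φ := continuous_const.add (b.repr.continuous.comp hψcont)
  have hg' : ∀ θ : ℝ, HasDerivAt g (D θ) θ := fun θ =>
    ((hu.differentiable one_ne_zero) (φ θ)).hasFDerivAt.comp_hasDerivAt θ (hφ' θ)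
  have hvcont : Continuous v := b.repr.continuous.comp
    ((hψcont.mul continuous_const))
  have hDcont : Continuous D :=
    ((hu.continuous_fderiv one_ne_zero).comp hφcont).clm_apply hvcont
  have hgradnorm : ∀ x : E2, ‖gradient u x‖ = ‖fderiv ℝ u x‖ := fun x => by
    rw [show gradient u x = (InnerProductSpace.toDual ℝ E2).symm (fderiv ℝ u x) from rfl,
      LinearIsometryEquiv.norm_map]
  have hvnorm : ∀ θ : ℝ, ‖v θ‖ = r := by
    intro θ
    rw [hvdef]
    rw [LinearIsometryEquiv.norm_map, norm_mul, norm_mul, Complex.norm_real,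
      Real.norm_eq_abs, Complex.norm_exp_ofReal_mul_I, Complex.norm_I, abs_of_pos hr]
    ring
  have hDb : ∀ θ : ℝ, D θ ^ 2 ≤ r ^ 2 * ‖gradient u (φ θ)‖ ^ 2 := by
    intro θ
    have h1 : |D θ| ≤ ‖fderiv ℝ u (φ θ)‖ * r := by
      calc |D θ| = ‖(fderiv ℝ u (φ θ)) (v θ)‖ := rfl
        _ ≤ ‖fderiv ℝ u (φ θ)‖ * ‖v θ‖ := (fderiv ℝ u (φ θ)).le_opNorm (v θ)
        _ = ‖fderiv ℝ u (φ θ)‖ * r := by rw [hvnorm θ]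
    calc D θ ^ 2 = |D θ| ^ 2 := (sq_abs _).symm
      _ ≤ (‖fderiv ℝ u (φ θ)‖ * r) ^ 2 := pow_le_pow_left₀ (abs_nonneg _) h1 2
      _ = r ^ 2 * ‖gradient u (φ θ)‖ ^ 2 := by rw [hgradnorm]; ring
  have hdist : ∀ θ : ℝ, dist (φ θ) xbar = r := by
    intro θ
    rw [hφdef]
    simp only [dist_self_add_left]
    rw [LinearIsometryEquiv.norm_map, hψdef]
    rw [norm_mul, Complex.norm_real, Real.norm_eq_abs,
      Complex.norm_exp_ofReal_mul_I, abs_of_pos hr, mul_one]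
  have hg0 : g θ₀ = 0 := hvan r hr
  set A : ℝ := ∫ t in Ioc (-π) π, D t ^ 2 with hA
  have hA0 : 0 ≤ A := setIntegral_nonneg measurableSet_Ioc fun t _ => sq_nonneg _
  have hwirt : ∀ θ ∈ Icc (-π) π, g θ ^ 2 ≤ 2 * π * A := fun θ hθ =>
    my_wirtinger g D hg' hDcont θ₀ θ hθ₀ hθ hg0
  have hπ := pi_pos
  -- bound the LHS slice
  have l1 : ∀ θ : ℝ, ENNReal.ofReal r * ENNReal.ofReal ((u (φ θ) / dist (φ θ) xbar) ^ 2)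
      = ENNReal.ofReal (g θ ^ 2 / r) := by
    intro θ
    rw [hdist θ, ← ENNReal.ofReal_mul hr.le]
    congr 1
    rw [hgdef]
    field_simp
  have l3 : ENNReal.ofReal (A / r) ≤
      ∫⁻ θ in Ioo (-π) π, ENNReal.ofReal r * ENNReal.ofReal (‖gradient u (φ θ)‖ ^ 2) := by
    have hint : IntegrableOn (fun t => D t ^ 2 / r) (Ioc (-π) π) :=
      ((hDcont.pow 2).div_const r).integrableOn_Ioc
    have e1 : ENNReal.ofReal (A / r)
        = ∫⁻ t in Ioc (-π) π, ENNReal.ofReal (D t ^ 2 / r) := by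
      rw [hA, ← integral_div]
      exact ofReal_integral_eq_lintegral_ofReal hint
        (Filter.Eventually.of_forall fun t => div_nonneg (sq_nonneg _) hr.le)
    rw [e1, ← setLIntegral_congr (Ioo_ae_eq_Ioc (a := -π) (b := π) (μ := volume))]
    refine setLIntegral_mono' measurableSet_Ioo fun θ _ => ?_
    calc ENNReal.ofReal (D θ ^ 2 / r)
        ≤ ENNReal.ofReal (r * ‖gradient u (φ θ)‖ ^ 2) := by
          refine ENNReal.ofReal_le_ofReal ?_
          rw [div_le_iff₀ hr]
          nlinarith [hDb θ]
      _ = ENNReal.ofReal r * ENNReal.ofReal (‖gradient u (φ θ)‖ ^ 2) :=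
          ENNReal.ofReal_mul hr.le
  calc ∫⁻ θ in Ioo (-π) π, ENNReal.ofReal r *
        ENNReal.ofReal ((u (φ θ) / dist (φ θ) xbar) ^ 2)
      = ∫⁻ θ in Ioo (-π) π, ENNReal.ofReal (g θ ^ 2 / r) := by
        exact lintegral_congr fun θ => l1 θ
    _ ≤ ∫⁻ _ in Ioo (-π) π, ENNReal.ofReal ((2 * π * A) / r) := by
        refine setLIntegral_mono' measurableSet_Ioo fun θ hθm => ?_
        refine ENNReal.ofReal_le_ofReal ?_
        gcongr
        exact hwirt θ (Ioo_subset_Icc_self hθm)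
    _ = ENNReal.ofReal ((2 * π * A) / r) * ENNReal.ofReal (2 * π) := by
        rw [setLIntegral_const, Real.volume_Ioo]
        congr 1
        ring_nf
    _ = ENNReal.ofReal (4 * π ^ 2) * ENNReal.ofReal (A / r) := by
        rw [← ENNReal.ofReal_mul (by positivity), ← ENNReal.ofReal_mul (by positivity)]
        congr 1
        field_simp
        ring
    _ ≤ ENNReal.ofReal (4 * π ^ 2) *
        ∫⁻ θ in Ioo (-π) π, ENNReal.ofReal r * ENNReal.ofReal (‖gradient u (φ θ)‖ ^ 2) :=
        mul_le_mul_right l3 _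

theorem my_key (u : E2 → ℝ) (hu : ContDiff ℝ 1 u) (xbar : E2) (θ₀ : ℝ)
    (hθ₀ : θ₀ ∈ Icc (-π) π)
    (hvan : ∀ r : ℝ, 0 < r →
      u (xbar + Complex.orthonormalBasisOneI.repr ((r : ℂ) * Complex.exp (θ₀ * Complex.I))) = 0) :
    (∫⁻ x, ENNReal.ofReal ((u x / dist x xbar) ^ 2)) ≤
      ENNReal.ofReal (4 * π ^ 2) * ∫⁻ x, ENNReal.ofReal (‖gradient u x‖ ^ 2) := by
  set b := Complex.orthonormalBasisOneI with hb
  set T : ℂ → E2 := fun z => xbar + b.repr z with hT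
  have hTmp : MeasurePreserving T volume volume :=
    (measurePreserving_add_left volume xbar).comp b.measurePreserving_repr
  have hTcont : Continuous T := continuous_const.add b.repr.continuous
  have hgradcont : Continuous (gradient u) := by
    have h1 : Continuous (fderiv ℝ u) := hu.continuous_fderiv one_ne_zero
    exact (InnerProductSpace.toDual ℝ E2).symm.continuous.comp h1
  set F₁ : E2 → ℝ≥0∞ := fun x => ENNReal.ofReal ((u x / dist x xbar) ^ 2) with hF₁
  set F₂ : E2 → ℝ≥0∞ := fun x => ENNReal.ofReal (‖gradient u x‖ ^ 2) with hF₂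
  have hF₁m : Measurable F₁ := by
    apply Measurable.ennreal_ofReal
    exact ((hu.continuous.measurable).div
      ((continuous_id.dist continuous_const).measurable)).pow_const 2
  have hF₂m : Measurable F₂ := ((hgradcont.norm.pow 2)).measurable.ennreal_ofReal
  have hsymm : ∀ p : ℝ × ℝ,
      Complex.polarCoord.symm p = ((p.1 : ℂ) * Complex.exp ((p.2 : ℂ) * Complex.I)) := by
    intro p
    simp [Complex.polarCoord_symm_apply, Complex.exp_mul_I, ← Complex.ofReal_cos,
      ← Complex.ofReal_sin]
  have hEcont : Continuous fun p : ℝ × ℝ => ((p.1 : ℂ) * Complex.exp ((p.2 : ℂ) * Complex.I)) :=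
    (Complex.continuous_ofReal.comp continuous_fst).mul
      (Complex.continuous_exp.comp ((Complex.continuous_ofReal.comp continuous_snd).mul
        continuous_const))
  have hmeas : ∀ (F : E2 → ℝ≥0∞), Measurable F → Measurable fun p : ℝ × ℝ =>
      ENNReal.ofReal p.1 * F (T ((p.1 : ℂ) * Complex.exp ((p.2 : ℂ) * Complex.I))) := by
    intro F hF
    exact (measurable_fst.ennreal_ofReal).mul
      (hF.comp (hTcont.comp hEcont).measurable)
  calc (∫⁻ x, F₁ x)
      = ∫⁻ z, F₁ (T z) := (hTmp.lintegral_comp hF₁m).symm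
    _ = ∫⁻ p in polarCoord.target, ENNReal.ofReal p.1 * F₁ (T (Complex.polarCoord.symm p)) :=
        (my_lintegral_polar_complex (fun z => F₁ (T z))
          (hF₁m.comp hTcont.measurable)).symm
    _ = ∫⁻ p in polarCoord.target,
          ENNReal.ofReal p.1 * F₁ (T ((p.1 : ℂ) * Complex.exp ((p.2 : ℂ) * Complex.I))) :=
        lintegral_congr fun p => by rw [hsymm p]
    _ = ∫⁻ r in Ioi (0:ℝ), ∫⁻ θ in Ioo (-π) π,
          ENNReal.ofReal r * F₁ (T ((r : ℂ) * Complex.exp ((θ : ℂ) * Complex.I))) :=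
        my_tonelli _ (hmeas F₁ hF₁m)
    _ ≤ ∫⁻ r in Ioi (0:ℝ), ENNReal.ofReal (4 * π ^ 2) * ∫⁻ θ in Ioo (-π) π,
          ENNReal.ofReal r * F₂ (T ((r : ℂ) * Complex.exp ((θ : ℂ) * Complex.I))) := by
        refine lintegral_mono_ae ((ae_restrict_iff' measurableSet_Ioi).2
          (Filter.Eventually.of_forall fun r hr => ?_))
        exact my_slice u hu xbar θ₀ hθ₀ hvan r hr
    _ = ENNReal.ofReal (4 * π ^ 2) * ∫⁻ r in Ioi (0:ℝ), ∫⁻ θ in Ioo (-π) π,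
          ENNReal.ofReal r * F₂ (T ((r : ℂ) * Complex.exp ((θ : ℂ) * Complex.I))) :=
        lintegral_const_mul' _ _ ENNReal.ofReal_ne_top
    _ = ENNReal.ofReal (4 * π ^ 2) * ∫⁻ x, F₂ x := by
        rw [← my_tonelli _ (hmeas F₂ hF₂m)]
        have : (∫⁻ p in polarCoord.target,
            ENNReal.ofReal p.1 * F₂ (T ((p.1 : ℂ) * Complex.exp ((p.2 : ℂ) * Complex.I))))
            = ∫⁻ p in polarCoord.target,
            ENNReal.ofReal p.1 * F₂ (T (Complex.polarCoord.symm p)) :=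
          lintegral_congr fun p => by rw [hsymm p]
        rw [this, my_lintegral_polar_complex (fun z => F₂ (T z))
          (hF₂m.comp hTcont.measurable), hTmp.lintegral_comp hF₂m]

/-- Weighted Poincaré (Hardy-type) inequality at a boundary point satisfying an exterior
cone condition: for every cone aperture `c > 0` there is `C > 0` depending only on `c`
such that for every bounded open `ω ⊆ ℝ²`, every `x̄ ∈ ∂ω` such that some rotated copy of
the double cone `K = {0 < x₂ < c|x₁|}` placed at `x̄` lies outside `closure ω`, and every
`u ∈ H¹₀(ω)` (represented by a `C¹` function compactly supported in `ω`),
`‖u / dist(·,x̄)‖_{L²(ω)} ≤ C ‖∇u‖_{L²(ω)}`. -/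
theorem stmt5 (c : ℝ) (hc : 0 < c) :
    ∃ C : ℝ, 0 < C ∧
      ∀ (ω : Set E2), Bornology.IsBounded ω → IsOpen ω →
      ∀ xbar : E2, xbar ∈ frontier ω →
      ∀ Q : E2 ≃ₗᵢ[ℝ] E2,
      -- exterior cone condition: x̄ + Q K ⊆ ℝ² \ closure ω
      (∀ y : E2, 0 < y 1 → y 1 < c * |y 0| → xbar + Q y ∉ closure ω) →
      ∀ u : E2 → ℝ, ContDiff ℝ 1 u → HasCompactSupport u → tsupport u ⊆ ω →
      Real.sqrt (∫ x in ω, (u x / dist x xbar) ^ 2) ≤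
        C * Real.sqrt (∫ x in ω, ‖gradient u x‖ ^ 2) := by
  have hπ := pi_pos
  refine ⟨2 * π, by positivity, ?_⟩
  intro ω hbound hopen xbar hxbar Q hcone u hu hcs hsupp
  have huzero : ∀ x : E2, x ∉ ω → u x = 0 := fun x hx =>
    image_eq_zero_of_notMem_tsupport fun hmem => hx (hsupp hmem)
  have hgradeq : ∀ x : E2, gradient u x
      = (InnerProductSpace.toDual ℝ E2).symm (fderiv ℝ u x) := fun x => rfl
  have hgradzero : ∀ x : E2, x ∉ tsupport u → gradient u x = 0 := by
    intro x hx
    have hfd : fderiv ℝ u x = 0 := by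
      by_contra h
      exact hx (support_fderiv_subset ℝ (Function.mem_support.2 h))
    rw [hgradeq, hfd, map_zero]
  have hgradzero' : ∀ x : E2, x ∉ ω → gradient u x = 0 := fun x hx =>
    hgradzero x fun hmem => hx (hsupp hmem)
  -- construct the vanishing ray
  set b := Complex.orthonormalBasisOneI with hb
  set y₀ : E2 := (WithLp.equiv 2 (Fin 2 → ℝ)).symm ![1, c/2] with hy₀def
  have hy₀0 : y₀ 0 = 1 := rfl
  have hy₀1 : y₀ 1 = c/2 := rfl
  have hy₀ne : y₀ ≠ 0 := by
    intro h
    have := congrFun (congrArg (WithLp.equiv 2 (Fin 2 → ℝ)) h) 0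
    simpa [hy₀def] using this
  set w : ℂ := b.repr.symm (Q y₀) with hw
  have hwne : w ≠ 0 := by
    rw [hw]
    intro h
    apply hy₀ne
    have h2 : Q y₀ = 0 := by
      have := congrArg b.repr h
      simpa using this
    simpa using congrArg Q.symm h2
  set θ₀ := Complex.arg w with hθ₀def
  have hθ₀ : θ₀ ∈ Icc (-π) π := ⟨(Complex.neg_pi_lt_arg w).le, Complex.arg_le_pi w⟩
  have hvan : ∀ r : ℝ, 0 < r →
      u (xbar + b.repr ((r : ℂ) * Complex.exp (θ₀ * Complex.I))) = 0 := by
    intro r hr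
    have haw : 0 < ‖w‖ := norm_pos_iff.mpr hwne
    set s : ℝ := r / ‖w‖ with hs
    have hs0 : 0 < s := div_pos hr haw
    have hexp : (r : ℂ) * Complex.exp (θ₀ * Complex.I) = s • w := by
      have h1 := Complex.norm_mul_exp_arg_mul_I w
      rw [Complex.real_smul, hs, ← hθ₀def] at *
      push_cast
      rw [← h1]
      have : ((‖w‖ : ℝ) : ℂ) ≠ 0 := by
        simpa using haw.ne'
      simp only [norm_mul, Complex.norm_real, norm_norm, Complex.norm_exp_ofReal_mul_I, mul_one]
      field_simp
    have hmem : xbar + b.repr ((r : ℂ) * Complex.exp (θ₀ * Complex.I)) = xbar + Q (s • y₀) := by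
      rw [hexp, _root_.map_smul, hw, LinearIsometryEquiv.apply_symm_apply, ← _root_.map_smul]
    rw [hmem]
    apply huzero
    have hKey : xbar + Q (s • y₀) ∉ closure ω := by
      apply hcone (s • y₀)
      · have : (s • y₀) 1 = s * (c/2) := by
          simp [hy₀1, PiLp.smul_apply, smul_eq_mul]
        rw [this]; positivity
      · have h1 : (s • y₀) 1 = s * (c/2) := by
          simp [hy₀1, PiLp.smul_apply, smul_eq_mul]
        have h0 : (s • y₀) 0 = s * 1 := by
          simp [hy₀0, PiLp.smul_apply, smul_eq_mul]
        rw [h1, h0, mul_one, abs_of_pos hs0]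
        nlinarith
    exact fun hmem' => hKey (subset_closure hmem')
  -- main estimate
  set I₁ : ℝ≥0∞ := ∫⁻ x, ENNReal.ofReal ((u x / dist x xbar) ^ 2) with hI₁
  set I₂ : ℝ≥0∞ := ∫⁻ x, ENNReal.ofReal (‖gradient u x‖ ^ 2) with hI₂
  have hmain : I₁ ≤ ENNReal.ofReal (4 * π ^ 2) * I₂ := my_key u hu xbar θ₀ hθ₀ hvan
  have hgradcont : Continuous (gradient u) := by
    have h1 : Continuous (fderiv ℝ u) := hu.continuous_fderiv one_ne_zero
    exact (InnerProductSpace.toDual ℝ E2).symm.continuous.comp h1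
  have hk : Continuous fun x : E2 => ‖gradient u x‖ ^ 2 := hgradcont.norm.pow 2
  have hkcs : HasCompactSupport fun x : E2 => ‖gradient u x‖ ^ 2 := by
    apply HasCompactSupport.intro hcs
    intro x hx
    rw [hgradzero x hx]
    simp
  have hki : Integrable (fun x : E2 => ‖gradient u x‖ ^ 2) :=
    hk.integrable_of_hasCompactSupport hkcs
  have hI₂eq : ENNReal.ofReal (∫ x, ‖gradient u x‖ ^ 2) = I₂ :=
    ofReal_integral_eq_lintegral_ofReal hki (Filter.Eventually.of_forall fun x => sq_nonneg _)
  have hI₂top : I₂ ≠ ⊤ := by rw [← hI₂eq]; exact ENNReal.ofReal_ne_top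
  have hmeas1 : AEStronglyMeasurable (fun x : E2 => (u x / dist x xbar) ^ 2) volume := by
    refine Measurable.aestronglyMeasurable ?_
    exact ((hu.continuous.measurable).div
      ((continuous_id.dist continuous_const).measurable)).pow_const 2
  have hL1 : ∫ x in ω, (u x / dist x xbar) ^ 2 = I₁.toReal := by
    rw [setIntegral_eq_integral_of_forall_compl_eq_zero
      (fun x hx => by rw [huzero x hx]; simp)]
    rw [integral_eq_lintegral_of_nonneg_ae
      (Filter.Eventually.of_forall fun x => sq_nonneg _) hmeas1]
  have hR1 : ∫ x in ω, ‖gradient u x‖ ^ 2 = I₂.toReal := by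
    rw [setIntegral_eq_integral_of_forall_compl_eq_zero
      (fun x hx => by rw [hgradzero' x hx]; simp)]
    rw [integral_eq_lintegral_of_nonneg_ae
      (Filter.Eventually.of_forall fun x => sq_nonneg _) hk.aestronglyMeasurable]
  rw [hL1, hR1]
  have h1 : I₁.toReal ≤ 4 * π ^ 2 * I₂.toReal := by
    have h2 := ENNReal.toReal_mono (ENNReal.mul_ne_top ENNReal.ofReal_ne_top hI₂top) hmain
    rwa [ENNReal.toReal_mul, ENNReal.toReal_ofReal (by positivity)] at h2
  calc Real.sqrt I₁.toReal ≤ Real.sqrt (4 * π ^ 2 * I₂.toReal) := Real.sqrt_le_sqrt h1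
    _ = 2 * π * Real.sqrt I₂.toReal := by
        rw [Real.sqrt_mul (by positivity) _]
        congr 1
        rw [show (4:ℝ) * π ^ 2 = (2 * π) ^ 2 by ring, Real.sqrt_sq (by positivity)]
end
end

section
/- Let $h_x, h_y \in (0,1]$ and $T_h = \{(x,y) : 0 < x < h_x,\ 0 < y < h_y(1 - x/h_x)\}$ be an anisotropic triangle. There exists $C > 0$ independent of $p$, $h_x$, $h_y$ such that for every bivariate polynomial $\pi$ of total degree at most $p$: $\|\pi\|_{L^\infty(T_h)} \le C\,p\,(h_y/h_x)^{1/2}\,\|\partial_y\pi\|_{L^2(T_h)} + \|\pi(\cdot,0)\|_{L^\infty(0,h_x)}$. -/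
/-!
On the vertical fibre above `x`, of height `Y(x) = h_y (1 - x / h_x)`, the fundamental theorem of
calculus and Cauchy–Schwarz give `|π(x,y) - π(x,0)|² ≤ Y(x) Z(x)` with
`Z(x) = ∫₀^{Y(x)} (∂_y π)(x,t)² dt`. As `Y` is affine, `Z` is a nonnegative polynomial of degree
at most `2p + 1`, and `∫₀^{h_x} Z` is the squared `L²(T_h)` norm of `∂_y π`. So it suffices to
bound `Z(x)` by `C p² / h_x ∫₀^{h_x} Z`, the `L¹`–`L∞` inverse inequality. That inequality follows
from Markov's inequality `(b - a) |z'| ≤ 4 q² ‖z‖_∞` on `[a, b]` (a rescaling of the Chebyshev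
extremal bound `z'(1) ≤ T_q'(1) = q²` for `|z| ≤ 1` on `[-1, 1]`): `|z|` stays above half its
maximum on an interval of length `(b - a) / (8 q²)`.
-/

open Set intervalIntegral

noncomputable section

/-- Evaluation of a bivariate polynomial at `(x, y)`. -/
def ev (P : MvPolynomial (Fin 2) ℝ) (x y : ℝ) : ℝ := MvPolynomial.eval ![x, y] P

open Polynomial

theorem exists_Icc_subset_Icc_mem {a b δ x₀ : ℝ} (hx₀ : x₀ ∈ Icc a b) (hδ0 : 0 ≤ δ)
    (hδ : δ ≤ b - a) : ∃ c, Icc c (c + δ) ⊆ Icc a b ∧ x₀ ∈ Icc c (c + δ) := by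
  refine ⟨min x₀ (b - δ), Icc_subset_Icc (le_min hx₀.1 (by linarith)) ?_, min_le_left _ _, ?_⟩ <;>
    rcases min_cases x₀ (b - δ) with h | h <;> linarith [h.1, hx₀.2]

namespace Polynomial

theorem abs_derivative_eval_one_le {n : ℕ} {P : ℝ[X]} {B : ℝ} (hB : 0 < B)
    (hP : P.natDegree ≤ n) (hPB : ∀ u ∈ Icc (-1 : ℝ) 1, |P.eval u| ≤ B) :
    |(derivative P).eval 1| ≤ n ^ 2 * B := by
  have chebyshev_bound : ∀ Q : ℝ[X], Q.natDegree ≤ n → (∀ u ∈ Icc (-1 : ℝ) 1, |Q.eval u| ≤ 1) →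
      (derivative Q).eval 1 ≤ n ^ 2 := fun Q hQ hQ1 => by
    have := Chebyshev.eval_iterate_derivative_le_of_forall_abs_le_one (k := 1) le_rfl
      (degree_le_of_natDegree_le hQ) hQ1
    simpa [Chebyshev.derivative_T_eval_one] using this
  have hscaled : ∀ u ∈ Icc (-1 : ℝ) 1, |(C B⁻¹ * P).eval u| ≤ 1 := fun u hu => by
    rw [eval_mul, eval_C, abs_mul, abs_inv, abs_of_pos hB, inv_mul_le_one₀ hB]
    exact hPB u hu
  have hdeg : (C B⁻¹ * P).natDegree ≤ n := (natDegree_C_mul_le _ _).trans hP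
  have hup := chebyshev_bound _ hdeg hscaled
  have hlow := chebyshev_bound _ (by rwa [natDegree_neg])
    (by simpa only [eval_neg, abs_neg] using hscaled)
  simp only [derivative_mul, derivative_C, zero_mul, zero_add, derivative_neg, eval_neg, eval_mul,
    eval_C] at hup hlow
  have key : |B⁻¹ * (derivative P).eval 1| ≤ n ^ 2 := abs_le.2 ⟨by linarith, hup⟩
  rwa [abs_mul, abs_inv, abs_of_pos hB, inv_mul_le_iff₀ hB, mul_comm] at key

theorem abs_sub_mul_abs_derivative_eval_le {n : ℕ} {P : ℝ[X]} {a b B e x : ℝ} (hB : 0 < B)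
    (hP : P.natDegree ≤ n) (hPB : ∀ t ∈ Icc a b, |P.eval t| ≤ B) (he : e ∈ Icc a b)
    (hx : x ∈ Icc a b) : |x - e| * |(derivative P).eval x| ≤ 2 * n ^ 2 * B := by
  set φ : ℝ[X] := C ((x + e) / 2) + C ((x - e) / 2) * X
  have hφ : ∀ u, φ.eval u = (1 + u) / 2 * x + (1 - u) / 2 * e := fun u => by
    simp only [φ, eval_add, eval_mul, eval_C, eval_X]; ring
  have hdeg : (P.comp φ).natDegree ≤ n := by
    have : φ.natDegree ≤ 1 := by simp only [φ]; compute_degree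
    exact natDegree_comp_le.trans (by nlinarith)
  have hbound : ∀ u ∈ Icc (-1 : ℝ) 1, |(P.comp φ).eval u| ≤ B := fun u hu => by
    rw [eval_comp, hφ]
    apply hPB
    constructor <;> nlinarith [hu.1, hu.2, he.1, he.2, hx.1, hx.2]
  have hφ1 : φ.eval 1 = x := by rw [hφ]; ring
  have hφ' : derivative φ = C ((x - e) / 2) := by simp [φ]
  have := abs_derivative_eval_one_le hB hdeg hbound
  rw [derivative_comp, eval_mul, eval_comp, hφ1, hφ', eval_C, abs_mul, abs_div, abs_two] at this
  linarith

theorem mul_abs_derivative_eval_le {n : ℕ} {P : ℝ[X]} {a b B x : ℝ} (hB : 0 < B)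
    (hP : P.natDegree ≤ n) (hPB : ∀ t ∈ Icc a b, |P.eval t| ≤ B) (hx : x ∈ Icc a b) :
    (b - a) * |(derivative P).eval x| ≤ 4 * n ^ 2 * B := by
  obtain ⟨e, he, hfar⟩ : ∃ e ∈ Icc a b, b - a ≤ 2 * |x - e| := by
    rcases le_total ((a + b) / 2) x with h | h
    · exact ⟨a, ⟨le_rfl, hx.1.trans hx.2⟩, by rw [abs_of_nonneg (by linarith [hx.1])]; linarith⟩
    · exact ⟨b, ⟨hx.1.trans hx.2, le_rfl⟩, by rw [abs_of_nonpos (by linarith [hx.2])]; linarith⟩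
  have := abs_sub_mul_abs_derivative_eval_le hB hP hPB he hx
  nlinarith [abs_nonneg ((derivative P).eval x)]

theorem mul_abs_eval_le_integral_abs {n : ℕ} (hn : 0 < n) {z : ℝ[X]} (hz : z.natDegree ≤ n)
    {a b x : ℝ} (hab : a < b) (hx : x ∈ Icc a b) :
    (b - a) * |z.eval x| ≤ 16 * n ^ 2 * ∫ t in a..b, |z.eval t| := by
  have hcont : Continuous fun t => |z.eval t| := z.continuous.abs
  obtain ⟨x₀, hx₀, hmax⟩ := isCompact_Icc.exists_isMaxOn (nonempty_Icc.2 hab.le) hcont.continuousOn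
  set M := |z.eval x₀|
  have hzM : ∀ t ∈ Icc a b, |z.eval t| ≤ M := fun t ht => hmax ht
  rcases (abs_nonneg (z.eval x₀)).eq_or_lt with hM | hM
  · rw [le_antisymm (hM ▸ hzM x hx) (abs_nonneg _), mul_zero]
    exact mul_nonneg (by positivity) (integral_nonneg hab.le fun t _ => abs_nonneg _)
  have hlip : ∀ t ∈ Icc a b, |z.eval t - z.eval x₀| ≤ 4 * n ^ 2 * M / (b - a) * |t - x₀| :=
    fun t ht => (convex_Icc a b).norm_image_sub_le_of_norm_deriv_le
      (fun s _ => z.differentiableAt) (fun s hs => by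
        rw [Polynomial.deriv, Real.norm_eq_abs, le_div_iff₀ (by linarith), mul_comm]
        exact mul_abs_derivative_eval_le hM hz hzM hs) hx₀ ht
  set δ := (b - a) / (8 * n ^ 2)
  have hn1 : (1 : ℝ) ≤ n := by exact_mod_cast hn
  have hδ : δ ≤ b - a := div_le_self (by linarith) (by nlinarith)
  obtain ⟨c, hsub, hx₀c⟩ := exists_Icc_subset_Icc_mem hx₀ (by positivity) hδ
  obtain ⟨hca, hcb⟩ := (Icc_subset_Icc_iff (by linarith [hx₀c.1, hx₀c.2])).1 hsub
  have hnear : ∀ t ∈ Icc c (c + δ), M / 2 ≤ |z.eval t| := fun t ht => by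
    have hdist : |t - x₀| ≤ δ := by
      simpa [Real.dist_eq] using Real.dist_le_of_mem_Icc ht hx₀c
    have hLδ : 4 * n ^ 2 * M / (b - a) * δ = M / 2 := by
      simp only [δ]; field_simp [(sub_pos.2 hab).ne']; ring
    have := hlip t (hsub ht)
    have := abs_sub_abs_le_abs_sub (z.eval x₀) (z.eval t)
    rw [abs_sub_comm] at this
    nlinarith [mul_le_mul_of_nonneg_left hdist (by positivity : (0 : ℝ) ≤ 4 * n ^ 2 * M / (b - a))]
  calc (b - a) * |z.eval x| ≤ (b - a) * M := mul_le_mul_of_nonneg_left (hzM x hx) (by linarith)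
    _ = 16 * n ^ 2 * ∫ _ in c..c + δ, M / 2 := by
      simp only [intervalIntegral.integral_const, smul_eq_mul, δ]; field_simp; ring
    _ ≤ 16 * n ^ 2 * ∫ t in c..c + δ, |z.eval t| := by
      gcongr
      exact integral_mono_on (by linarith [hx₀c.1, hx₀c.2]) intervalIntegrable_const
        (hcont.intervalIntegrable _ _) hnear
    _ ≤ 16 * n ^ 2 * ∫ t in a..b, |z.eval t| := by
      gcongr
      exact integral_mono_interval hca (by linarith [hx₀c.1, hx₀c.2]) hcb
        (Filter.Eventually.of_forall fun t => abs_nonneg _) (hcont.intervalIntegrable _ _)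

end Polynomial

theorem MvPolynomial.totalDegree_pderiv_le {σ R : Type*} [CommSemiring R] (i : σ)
    (f : MvPolynomial σ R) : (pderiv i f).totalDegree ≤ f.totalDegree := by
  classical
  conv_lhs => rw [f.as_sum, map_sum]
  refine totalDegree_finsetSum_le fun m hm => ?_
  rw [pderiv_monomial]
  exact (totalDegree_monomial_le _ _).trans ((Finsupp.degree_mono tsub_le_self).trans
    (le_totalDegree hm))

theorem sq_integral_le_mul_integral_sq {G : ℝ → ℝ} (hG : Continuous G) {a b : ℝ} (hab : a ≤ b) :
    (∫ t in a..b, G t) ^ 2 ≤ (b - a) * ∫ t in a..b, G t ^ 2 := by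
  rcases hab.eq_or_lt with rfl | hlt
  · simp
  have hexpand : ∀ t, ((b - a) * G t - ∫ s in a..b, G s) ^ 2
      = (b - a) ^ 2 * G t ^ 2 - 2 * (b - a) * (∫ s in a..b, G s) * G t
        + (∫ s in a..b, G s) ^ 2 := fun t => by ring
  have key : 0 ≤ (b - a) * ((b - a) * (∫ t in a..b, G t ^ 2) - (∫ t in a..b, G t) ^ 2) :=
    calc 0 ≤ ∫ t in a..b, ((b - a) * G t - ∫ s in a..b, G s) ^ 2 :=
          integral_nonneg hab fun _ _ => sq_nonneg _
      _ = _ := by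
        simp_rw [hexpand]
        rw [integral_add, integral_sub, integral_const_mul, integral_const_mul, integral_const,
          smul_eq_mul]
        · ring
        all_goals exact (by fun_prop : Continuous _).intervalIntegrable _ _
  exact sub_nonneg.1 ((mul_nonneg_iff_of_pos_left (sub_pos.2 hlt)).1 key)

theorem hasDerivAt_ev_pderiv_one (Q : MvPolynomial (Fin 2) ℝ) (x y : ℝ) :
    HasDerivAt (fun t => ev Q x t) (ev (MvPolynomial.pderiv 1 Q) x y) y := by
  induction Q using MvPolynomial.induction_on with
  | C a => simpa [ev] using hasDerivAt_const y a
  | add f g hf hg => simpa [ev] using hf.fun_add hg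
  | mul_X f i hf =>
    fin_cases i
    · simpa [ev, MvPolynomial.pderiv_X] using (hf.mul_const x).congr_deriv (mul_comm _ _)
    · simpa [ev, MvPolynomial.pderiv_X] using
        (hf.fun_mul (hasDerivAt_id y)).congr_deriv (by simp only [ev, id]; ring)

theorem continuous_ev (Q : MvPolynomial (Fin 2) ℝ) (x : ℝ) : Continuous (ev Q x) :=
  continuous_iff_continuousAt.2 fun y => (hasDerivAt_ev_pderiv_one Q x y).continuousAt

theorem integral_ev_pderiv_one (Q : MvPolynomial (Fin 2) ℝ) (x y : ℝ) :
    ∫ t in (0 : ℝ)..y, ev (MvPolynomial.pderiv 1 Q) x t = ev Q x y - ev Q x 0 :=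
  integral_eq_sub_of_hasDerivAt (fun t _ => hasDerivAt_ev_pderiv_one Q x t)
    ((continuous_ev _ x).intervalIntegrable _ _)

theorem abs_ev_sub_ev_zero_le (π : MvPolynomial (Fin 2) ℝ) {x y Y : ℝ} (hy : 0 ≤ y)
    (hyY : y ≤ Y) :
    |ev π x y - ev π x 0| ≤ √(Y * ∫ t in (0 : ℝ)..Y, ev (MvPolynomial.pderiv 1 π) x t ^ 2) := by
  have hcont := continuous_ev (MvPolynomial.pderiv 1 π) x
  rw [← integral_ev_pderiv_one, ← Real.sqrt_sq_eq_abs]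
  refine Real.sqrt_le_sqrt ((sq_integral_le_mul_integral_sq hcont hy).trans ?_)
  rw [sub_zero]
  exact mul_le_mul hyY (integral_mono_interval le_rfl hy hyY
    (Filter.Eventually.of_forall fun t => sq_nonneg _) ((hcont.pow 2).intervalIntegrable _ _))
    (integral_nonneg hy fun _ _ => sq_nonneg _) (hy.trans hyY)

theorem ev_eq_sum (Q : MvPolynomial (Fin 2) ℝ) (s t : ℝ) :
    ev Q s t = ∑ m ∈ Q.support, MvPolynomial.coeff m Q * (s ^ m 0 * t ^ m 1) := by
  simp [ev, MvPolynomial.eval_eq', Fin.prod_univ_two]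

theorem exists_eval_eq_integral_ev (Q : MvPolynomial (Fin 2) ℝ) {A : ℝ[X]}
    (hA : A.natDegree ≤ 1) :
    ∃ Z : ℝ[X], Z.natDegree ≤ Q.totalDegree + 1 ∧
      ∀ s, Z.eval s = ∫ t in (0 : ℝ)..A.eval s, ev Q s t := by
  refine ⟨∑ m ∈ Q.support,
    C (MvPolynomial.coeff m Q / (m 1 + 1)) * (X ^ m 0 * A ^ (m 1 + 1)), ?_, fun s => ?_⟩
  · refine natDegree_sum_le_of_forall_le _ _ fun m hm => ?_
    have hm' := MvPolynomial.le_totalDegree hm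
    rw [Finsupp.sum_fintype _ _ fun _ => rfl, Fin.sum_univ_two] at hm'
    have := natDegree_pow_le_of_le (m 1 + 1) hA
    have := natDegree_X_pow_le (R := ℝ) (m 0)
    refine (natDegree_C_mul_le _ _).trans (natDegree_mul_le.trans ?_)
    omega
  · simp_rw [ev_eq_sum, eval_finsetSum]
    rw [integral_finsetSum fun m _ => (by fun_prop : Continuous _).intervalIntegrable _ _]
    refine Finset.sum_congr rfl fun m _ => ?_
    simp only [eval_mul, eval_C, eval_pow, eval_X, integral_const_mul, integral_pow,
      Nat.succ_ne_zero, ne_eq, not_false_eq_true, zero_pow, sub_zero]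
    field_simp

theorem mul_integral_sq_pderiv_le {p : ℕ} {π : MvPolynomial (Fin 2) ℝ}
    (hπ : π.totalDegree ≤ p) {hx hy x : ℝ} (hhx : 0 < hx) (hhy : 0 ≤ hy) (hxI : x ∈ Icc 0 hx) :
    hx * ∫ t in (0 : ℝ)..hy * (1 - x / hx), ev (MvPolynomial.pderiv 1 π) x t ^ 2 ≤
      16 * (2 * p + 1) ^ 2 * ∫ s in (0 : ℝ)..hx, ∫ t in (0 : ℝ)..hy * (1 - s / hx),
        ev (MvPolynomial.pderiv 1 π) s t ^ 2 := by
  set g := MvPolynomial.pderiv 1 π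
  set A : ℝ[X] := C hy * (1 - C hx⁻¹ * X)
  have hA : ∀ s, A.eval s = hy * (1 - s / hx) := fun s => by
    simp only [A, eval_mul, eval_C, eval_sub, eval_one, eval_X]; ring
  have hgdeg : (g ^ 2).totalDegree ≤ 2 * p :=
    (MvPolynomial.totalDegree_pow _ _).trans
      (Nat.mul_le_mul_left 2 ((MvPolynomial.totalDegree_pderiv_le 1 π).trans hπ))
  obtain ⟨Z, hZdeg, hZ⟩ :=
    exists_eval_eq_integral_ev (g ^ 2) (A := A) (by simp only [A]; compute_degree)
  simp only [hA, ev, map_pow] at hZ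
  have hZnn : ∀ s ∈ Icc 0 hx, 0 ≤ Z.eval s := fun s hs => by
    rw [hZ]
    refine integral_nonneg (mul_nonneg hhy ?_) fun _ _ => sq_nonneg _
    linarith [(div_le_one hhx).2 hs.2]
  have hinv := mul_abs_eval_le_integral_abs (n := 2 * p + 1) (z := Z) (by omega) (by omega) hhx hxI
  rw [sub_zero, abs_of_nonneg (hZnn x hxI), integral_congr fun s hs =>
    abs_of_nonneg (hZnn s (by rwa [uIcc_of_le hhx.le] at hs))] at hinv
  simp only [hZ] at hinv
  exact_mod_cast hinv

theorem sqrt_mul_integral_sq_pderiv_le {p : ℕ} (hp : 0 < p) {π : MvPolynomial (Fin 2) ℝ}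
    (hπ : π.totalDegree ≤ p) {hx hy x : ℝ} (hhx : 0 < hx) (hhy : 0 < hy) (hxI : x ∈ Icc 0 hx) :
    √(hy * (1 - x / hx) * ∫ t in (0 : ℝ)..hy * (1 - x / hx), ev (MvPolynomial.pderiv 1 π) x t ^ 2)
      ≤ 12 * p * √(hy / hx) * √(∫ s in (0 : ℝ)..hx, ∫ t in (0 : ℝ)..hy * (1 - s / hx),
        ev (MvPolynomial.pderiv 1 π) s t ^ 2) := by
  set F := ∫ t in (0 : ℝ)..hy * (1 - x / hx), ev (MvPolynomial.pderiv 1 π) x t ^ 2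
  set I := ∫ s in (0 : ℝ)..hx, ∫ t in (0 : ℝ)..hy * (1 - s / hx),
    ev (MvPolynomial.pderiv 1 π) s t ^ 2
  have hfiber : hx * F ≤ 16 * (2 * p + 1) ^ 2 * I := mul_integral_sq_pderiv_le hπ hhx hhy.le hxI
  have hF : 0 ≤ F := integral_nonneg (mul_nonneg hhy.le (by linarith [(div_le_one hhx).2 hxI.2]))
    fun _ _ => sq_nonneg _
  have hI : 0 ≤ I := (mul_nonneg_iff_of_pos_left (by positivity)).1
    ((mul_nonneg hhx.le hF).trans hfiber)
  have hp1 : (1 : ℝ) ≤ p := by exact_mod_cast hp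
  calc √(hy * (1 - x / hx) * F) ≤ √((12 * p) ^ 2 * (hy / hx * I)) := by
        refine Real.sqrt_le_sqrt ?_
        calc hy * (1 - x / hx) * F ≤ hy / hx * (hx * F) := by
              field_simp; nlinarith [hxI.1]
          _ ≤ hy / hx * (16 * (2 * p + 1) ^ 2 * I) := by gcongr
          _ ≤ (12 * p) ^ 2 * (hy / hx * I) := by rw [mul_left_comm]; gcongr; nlinarith
    _ = 12 * p * √(hy / hx) * √I := by
      rw [Real.sqrt_mul (by positivity), Real.sqrt_sq (by positivity),
        Real.sqrt_mul (div_pos hhy hhx).le]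
      ring

/-- Anisotropic polynomial inverse estimate on the triangle
`T_h = {(x,y) : 0 < x < h_x, 0 < y < h_y (1 - x/h_x)}`:
there is `C > 0` independent of `p, h_x, h_y` such that for every bivariate polynomial
`π` of total degree at most `p`,
`‖π‖_{L∞(T_h)} ≤ C p (h_y/h_x)^{1/2} ‖∂_y π‖_{L²(T_h)} + ‖π(·,0)‖_{L∞(0,h_x)}`
(sup norms expressed pointwise resp. via a bound `M`). -/
theorem stmt7 :
    ∃ C : ℝ, 0 < C ∧
      ∀ (p : ℕ) (hx hy : ℝ), hx ∈ Set.Ioc (0 : ℝ) 1 → hy ∈ Set.Ioc (0 : ℝ) 1 →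
      ∀ π : MvPolynomial (Fin 2) ℝ, MvPolynomial.totalDegree π ≤ p →
      ∀ M : ℝ, (∀ x ∈ Set.Ioo (0 : ℝ) hx, |ev π x 0| ≤ M) →
      ∀ x y : ℝ, 0 < x → x < hx → 0 < y → y < hy * (1 - x / hx) →
        |ev π x y| ≤
          C * (p : ℝ) * Real.sqrt (hy / hx) *
              Real.sqrt (∫ s in (0 : ℝ)..hx, ∫ t in (0 : ℝ)..(hy * (1 - s / hx)),
                (ev (MvPolynomial.pderiv (1 : Fin 2) π) s t) ^ 2) + M := by
  refine ⟨12, by norm_num, fun p hx hy ⟨hhx, _⟩ ⟨hhy, _⟩ π hπ M hM x y hx0 hxhx hy0 hyY => ?_⟩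
  have hbase := hM x ⟨hx0, hxhx⟩
  rcases Nat.eq_zero_or_pos p with rfl | hp
  · obtain ⟨a, rfl⟩ : ∃ a, π = MvPolynomial.C a :=
      ⟨_, MvPolynomial.totalDegree_eq_zero_iff_eq_C.1 (Nat.le_zero.1 hπ)⟩
    simpa [ev] using hbase
  calc |ev π x y| ≤ |ev π x y - ev π x 0| + |ev π x 0| := by
        linarith [abs_sub_abs_le_abs_sub (ev π x y) (ev π x 0)]
    _ ≤ √(hy * (1 - x / hx) * ∫ t in (0 : ℝ)..hy * (1 - x / hx),
          ev (MvPolynomial.pderiv 1 π) x t ^ 2) + M :=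
        add_le_add (abs_ev_sub_ev_zero_le π hy0.le hyY.le) hbase
    _ ≤ _ := by
        gcongr
        exact sqrt_mul_integral_sq_pderiv_le hp hπ hhx hhy ⟨hx0.le, hxhx.le⟩
end
end

section
/- For every univariate polynomial $z$ of degree at most $p$ and every $h > 0$, $\|z\|_{L^\infty(0,h)} \le C\,p^2\,h^{-1}\,\|z\|_{L^1(0,h)}$ with an absolute constant $C > 0$ independent of $p$, $h$, and $z$. -/
open Set intervalIntegral

namespace Nik

open Real Polynomial Polynomial.Chebyshev Finset

lemma T_natDeg_le : ∀ n : ℕ, ((T ℝ n).natDegree ≤ n) := by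
  intro n
  induction n using Nat.strong_induction_on with
  | _ n ih =>
    match n with
    | 0 => simp
    | 1 => simp
    | (m+2) =>
      have h1 := ih (m+1) (by omega)
      have h0 := ih m (by omega)
      rw [show ((m+2:ℕ):ℤ) = (m:ℤ)+2 by push_cast; ring, T_add_two]
      refine le_trans (natDegree_sub_le _ _) (max_le ?_ ?_)
      · calc (2 * X * T ℝ ((m:ℤ)+1)).natDegree
            ≤ (2 * X : ℝ[X]).natDegree + (T ℝ ((m:ℤ)+1)).natDegree := natDegree_mul_le
          _ ≤ 1 + (m+1) := by
              gcongr
              · calc (2*X : ℝ[X]).natDegree ≤ (2:ℝ[X]).natDegree + X.natDegree := natDegree_mul_le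
                  _ ≤ 1 := by simp
              · exact_mod_cast h1
          _ = m + 2 := by ring
      · exact le_trans h0 (by omega)

lemma T_coeff_top : ∀ n : ℕ, (T ℝ ((n:ℤ)+1)).coeff (n+1) = 2^n := by
  intro n
  induction n with
  | zero => simp
  | succ m ih =>
    have h0 : (T ℝ (m:ℤ)).coeff (m+2) = 0 :=
      coeff_eq_zero_of_natDegree_lt (lt_of_le_of_lt (T_natDeg_le m) (by omega))
    rw [show ((m+1:ℕ):ℤ)+1 = (m:ℤ)+2 by push_cast; ring, T_add_two]
    rw [coeff_sub, h0, sub_zero, show (2 * X * T ℝ ((m:ℤ)+1)) = C 2 * (X * T ℝ ((m:ℤ)+1)) by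
      rw [map_ofNat]; ring, coeff_C_mul, show m+1+1 = (m+1)+1 from rfl, coeff_X_mul, ih]
    ring

lemma cheb_expand : ∀ (n : ℕ) (z : ℝ[X]), z.natDegree ≤ n →
    ∃ a : ℕ → ℝ, z = ∑ k ∈ range (n+1), C (a k) * T ℝ (k:ℤ) := by
  intro n
  induction n with
  | zero =>
    intro z hz
    exact ⟨fun _ => z.coeff 0, by
      simp [Finset.sum_range_one, ← Polynomial.eq_C_of_natDegree_le_zero hz]⟩
  | succ n ih =>
    intro z hz
    set c := z.coeff (n+1) / 2^n with hc
    have hw : (z - C c * T ℝ ((n:ℤ)+1)).natDegree ≤ n := by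
      refine natDegree_le_iff_coeff_eq_zero.mpr fun N hN => ?_
      rcases eq_or_lt_of_le (Nat.succ_le_of_lt hN) with hN1 | hN2
      · rw [coeff_sub, coeff_C_mul, ← hN1, T_coeff_top, hc]
        field_simp
        ring
      · have hz0 : z.coeff N = 0 := coeff_eq_zero_of_natDegree_lt (lt_of_le_of_lt hz hN2)
        have hT0 : (T ℝ ((n:ℤ)+1)).coeff N = 0 := by
          refine coeff_eq_zero_of_natDegree_lt (lt_of_le_of_lt ?_ hN2)
          exact_mod_cast T_natDeg_le (n+1)
        rw [coeff_sub, coeff_C_mul, hz0, hT0, mul_zero, sub_zero]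
    obtain ⟨a, ha⟩ := ih _ hw
    refine ⟨Function.update a (n+1) c, ?_⟩
    rw [Finset.sum_range_succ, Function.update_self]
    have : ∑ k ∈ range (n+1), C (Function.update a (n+1) c k) * T ℝ (k:ℤ)
        = ∑ k ∈ range (n+1), C (a k) * T ℝ (k:ℤ) := by
      refine Finset.sum_congr rfl fun k hk => ?_
      rw [Function.update_of_ne (by simp at hk; omega)]
    rw [this, ← ha]
    push_cast
    ring

lemma integral_cos_int (m : ℤ) :
    ∫ θ in (0:ℝ)..π, Real.cos (m * θ) = if m = 0 then π else 0 := by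
  rcases eq_or_ne m 0 with h | h
  · simp [h, pi_pos.le]
  · have hm : (m:ℝ) ≠ 0 := Int.cast_ne_zero.mpr h
    rw [if_neg h]
    have := intervalIntegral.integral_comp_mul_left (a := (0:ℝ)) (b := π)
      (fun x => Real.cos x) hm
    simp only [integral_cos] at this
    rw [this, mul_zero, Real.sin_int_mul_pi, Real.sin_zero, sub_zero, smul_eq_mul, mul_zero]

lemma integral_cos_mul_cos (j k : ℕ) :
    ∫ θ in (0:ℝ)..π, Real.cos (j*θ) * Real.cos (k*θ)
      = if j = k then (if j = 0 then π else π/2) else 0 := by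
  have key : ∀ θ : ℝ, Real.cos (j*θ) * Real.cos (k*θ)
      = (Real.cos ((((j:ℤ)+k):ℤ) * θ) + Real.cos ((((j:ℤ)-k):ℤ) * θ)) / 2 := by
    intro θ
    push_cast
    rw [show ((j:ℝ)+k)*θ = (j:ℝ)*θ + k*θ by ring, show ((j:ℝ)-k)*θ = (j:ℝ)*θ - k*θ by ring,
      Real.cos_add, Real.cos_sub]
    ring
  have hint : ∀ m : ℤ, IntervalIntegrable (fun θ : ℝ => Real.cos (m*θ))
      MeasureTheory.volume 0 π := fun m =>
    (Real.continuous_cos.comp (continuous_const.mul continuous_id)).intervalIntegrable _ _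
  calc ∫ θ in (0:ℝ)..π, Real.cos (j*θ) * Real.cos (k*θ)
      = ∫ θ in (0:ℝ)..π,
          (Real.cos ((((j:ℤ)+k):ℤ) * θ) + Real.cos ((((j:ℤ)-k):ℤ) * θ)) / 2 := by
        simp_rw [key]
    _ = ((∫ θ in (0:ℝ)..π, Real.cos ((((j:ℤ)+k):ℤ) * θ))
          + ∫ θ in (0:ℝ)..π, Real.cos ((((j:ℤ)-k):ℤ) * θ)) / 2 := by
        rw [intervalIntegral.integral_div, intervalIntegral.integral_add (hint _) (hint _)]
    _ = _ := by
        rw [integral_cos_int, integral_cos_int]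
        rcases eq_or_ne j k with rfl | hjk
        · rcases eq_or_ne j 0 with rfl | hj0
          · norm_num
          · rw [if_neg (by exact_mod_cast by omega : ¬((j:ℤ)+j = 0)), if_pos (by ring)]
            norm_num [hj0]
        · rw [if_neg (by omega : ¬((j:ℤ)+(k:ℤ) = 0)), if_neg (by
            intro hh
            exact hjk (by exact_mod_cast sub_eq_zero.mp hh)), if_neg hjk]
          ring

lemma parseval (p : ℕ) (a : ℕ → ℝ) :
    (π/2) * ∑ k ∈ range (p+1), (a k)^2 ≤
      ∫ θ in (0:ℝ)..π, (∑ k ∈ range (p+1), a k * Real.cos (k*θ))^2 := by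
  have hcont : ∀ j k : ℕ, Continuous fun θ : ℝ => (a j * a k) * (Real.cos (j*θ) * Real.cos (k*θ)) := by
    intro j k
    exact continuous_const.mul ((Real.continuous_cos.comp (continuous_const.mul continuous_id)).mul
      (Real.continuous_cos.comp (continuous_const.mul continuous_id)))
  have expand : ∀ θ : ℝ, (∑ k ∈ range (p+1), a k * Real.cos (k*θ))^2
      = ∑ j ∈ range (p+1), ∑ k ∈ range (p+1),
          (a j * a k) * (Real.cos (j*θ) * Real.cos (k*θ)) := by
    intro θ
    rw [sq, Finset.sum_mul_sum]
    exact Finset.sum_congr rfl fun j _ => Finset.sum_congr rfl fun k _ => by ring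
  have step : ∫ θ in (0:ℝ)..π, (∑ k ∈ range (p+1), a k * Real.cos (k*θ))^2
      = ∑ j ∈ range (p+1), ∑ k ∈ range (p+1), (a j * a k) *
          (if j = k then (if j = 0 then π else π/2) else 0) := by
    simp_rw [expand]
    rw [intervalIntegral.integral_finset_sum (fun j _ =>
      (continuous_finset_sum _ fun k _ => hcont j k).intervalIntegrable _ _)]
    refine Finset.sum_congr rfl fun j _ => ?_
    rw [intervalIntegral.integral_finset_sum (fun k _ => (hcont j k).intervalIntegrable _ _)]
    refine Finset.sum_congr rfl fun k _ => ?_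
    rw [intervalIntegral.integral_const_mul, integral_cos_mul_cos]
  rw [step]
  have diag : ∀ j ∈ range (p+1), ∑ k ∈ range (p+1), (a j * a k) *
      (if j = k then (if j = 0 then π else π/2) else 0)
      = (a j)^2 * (if j = 0 then π else π/2) := by
    intro j hj
    rw [Finset.sum_eq_single_of_mem j hj]
    · simp [sq]
    · intro k _ hk
      rw [if_neg (Ne.symm hk), mul_zero]
  rw [Finset.sum_congr rfl diag, Finset.mul_sum]
  refine Finset.sum_le_sum fun j _ => ?_
  rcases eq_or_ne j 0 with rfl | hj
  · rw [if_pos rfl]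
    nlinarith [sq_nonneg (a 0), pi_pos]
  · rw [if_neg hj]
    ring_nf
    exact le_refl _

set_option maxHeartbeats 2000000 in
lemma core (p : ℕ) (hp : 1 ≤ p) (z : ℝ[X]) (hz : z.natDegree ≤ p) :
    ∀ x ∈ Set.Icc (-1:ℝ) 1, |z.eval x| ≤ (256/(3*π)) * p^2 * ∫ t in (-1:ℝ)..1, |z.eval t| := by
  have hzc : Continuous fun t : ℝ => z.eval t := z.continuous
  have hzac : Continuous fun t : ℝ => |z.eval t| := hzc.abs
  have hGc : Continuous fun θ : ℝ => (z.eval (Real.cos θ))^2 :=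
    ((hzc.comp Real.continuous_cos).pow 2)
  obtain ⟨x0, hx0, hmax'⟩ := isCompact_Icc.exists_isMaxOn (⟨-1, by norm_num⟩ :
    (Set.Icc (-1:ℝ) 1).Nonempty) hzac.continuousOn
  have hmax : ∀ y ∈ Set.Icc (-1:ℝ) 1, |z.eval y| ≤ |z.eval x0| := fun y hy => hmax' hy
  set M := |z.eval x0| with hMdef
  have hM0 : 0 ≤ M := abs_nonneg _
  set L := ∫ t in (-1:ℝ)..1, |z.eval t| with hLdef
  have hL0 : 0 ≤ L := intervalIntegral.integral_nonneg (by norm_num) fun t _ => abs_nonneg _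
  set J := ∫ t in (-1:ℝ)..1, (z.eval t)^2 with hJdef
  have hJ0 : 0 ≤ J := intervalIntegral.integral_nonneg (by norm_num) fun t _ => sq_nonneg _
  -- J ≤ M * L
  have hJML : J ≤ M * L := by
    have hmono : ∫ t in (-1:ℝ)..1, (z.eval t)^2 ≤ ∫ t in (-1:ℝ)..1, M * |z.eval t| := by
      refine intervalIntegral.integral_mono_on (by norm_num)
        ((hzc.pow 2).intervalIntegrable _ _) ((continuous_const.mul hzac).intervalIntegrable _ _)
        fun t ht => ?_
      have h1 : |z.eval t| ≤ M := hmax t ht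
      nlinarith [abs_nonneg (z.eval t), sq_abs (z.eval t)]
    rwa [intervalIntegral.integral_const_mul] at hmono
  -- Chebyshev expansion
  obtain ⟨a, ha⟩ := cheb_expand p z hz
  have hfeq : ∀ θ : ℝ, z.eval (Real.cos θ) = ∑ k ∈ range (p+1), a k * Real.cos (k*θ) := by
    intro θ
    conv_lhs => rw [ha]
    rw [Polynomial.eval_finset_sum]
    refine Finset.sum_congr rfl fun k _ => ?_
    rw [Polynomial.eval_mul, Polynomial.eval_C, Polynomial.Chebyshev.T_real_cos]
    norm_num
  set S := ∑ k ∈ range (p+1), (a k)^2 with hSdef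
  have hS0 : 0 ≤ S := Finset.sum_nonneg fun k _ => sq_nonneg _
  set P := (p:ℝ) + 1 with hPdef
  have hP2 : 2 ≤ P := by
    have : (1:ℝ) ≤ (p:ℝ) := by exact_mod_cast hp
    linarith
  have hP0 : 0 < P := by linarith
  -- Step 1 : M^2 ≤ P * S
  have key1 : M^2 ≤ P * S := by
    have hcos : Real.cos (Real.arccos x0) = x0 := Real.cos_arccos hx0.1 hx0.2
    have hM1 : M ≤ ∑ k ∈ range (p+1), |a k| := by
      calc M = |z.eval (Real.cos (Real.arccos x0))| := by rw [hcos]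
        _ = |∑ k ∈ range (p+1), a k * Real.cos (k * Real.arccos x0)| := by rw [hfeq]
        _ ≤ ∑ k ∈ range (p+1), |a k * Real.cos (k * Real.arccos x0)| :=
            Finset.abs_sum_le_sum_abs _ _
        _ ≤ ∑ k ∈ range (p+1), |a k| := by
            refine Finset.sum_le_sum fun k _ => ?_
            rw [abs_mul]
            exact mul_le_of_le_one_right (abs_nonneg _) (Real.abs_cos_le_one _)
    have hCS : (∑ k ∈ range (p+1), |a k|)^2 ≤ P * S := by
      have := Finset.sum_mul_sq_le_sq_mul_sq (range (p+1)) (fun _ => (1:ℝ)) (fun k => |a k|)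
      simpa [hSdef, hPdef, sq_abs, Finset.card_range] using this
    calc M^2 ≤ (∑ k ∈ range (p+1), |a k|)^2 := by
          have h2 : 0 ≤ ∑ k ∈ range (p+1), |a k| := Finset.sum_nonneg fun k _ => abs_nonneg _
          nlinarith
      _ ≤ P * S := hCS
  -- Step 2 : (π/2) S ≤ If
  set If := ∫ θ in (0:ℝ)..π, (z.eval (Real.cos θ))^2 with hIfdef
  have key2 : (π/2) * S ≤ If := by
    have : If = ∫ θ in (0:ℝ)..π, (∑ k ∈ range (p+1), a k * Real.cos (k*θ))^2 := by
      simp only [hIfdef]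
      congr 1
      funext θ
      rw [hfeq]
    rw [this]
    exact parseval p a
  -- pointwise bound
  have hpw : ∀ θ : ℝ, (z.eval (Real.cos θ))^2 ≤ M^2 := by
    intro θ
    have h1 : |z.eval (Real.cos θ)| ≤ M :=
      hmax _ ⟨Real.neg_one_le_cos θ, Real.cos_le_one θ⟩
    nlinarith [abs_nonneg (z.eval (Real.cos θ)), sq_abs (z.eval (Real.cos θ))]
  -- δ facts
  set δ := π/(16*P) with hδdef
  have hδpos : 0 < δ := by positivity
  have hδhalf : δ ≤ π/2 := by
    rw [hδdef, div_le_div_iff₀ (by positivity) (by norm_num)]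
    nlinarith [pi_pos]
  have hδle1 : δ ≤ π - δ := by linarith [pi_pos]
  have hsinδ : 1/(8*P) ≤ Real.sin δ := by
    have := Real.mul_le_sin hδpos.le hδhalf
    calc 1/(8*P) = 2/π * δ := by
          rw [hδdef]; field_simp; ring
      _ ≤ Real.sin δ := this
  have hsinδpos : 0 < Real.sin δ := lt_of_lt_of_le (by positivity) hsinδ
  -- sin lower bound on middle interval
  have hsinlow : ∀ θ ∈ Set.Icc δ (π - δ), Real.sin δ ≤ Real.sin θ := by
    intro θ hθ
    have hθ1 := hθ.1
    have hθ2 := hθ.2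
    have hpi := pi_pos
    rcases le_or_gt θ (π/2) with hle | hgt
    · exact Real.strictMonoOn_sin.monotoneOn ⟨by linarith, hδhalf⟩ ⟨by linarith, hle⟩ hθ1
    · rw [← Real.sin_pi_sub θ]
      exact Real.strictMonoOn_sin.monotoneOn ⟨by linarith, hδhalf⟩
        ⟨by linarith, by linarith⟩ (by linarith)
  -- splitting
  have hint : ∀ u v : ℝ, IntervalIntegrable (fun θ => (z.eval (Real.cos θ))^2)
      MeasureTheory.volume u v := fun u v => hGc.intervalIntegrable _ _
  have hsplit : If = (∫ θ in (0:ℝ)..δ, (z.eval (Real.cos θ))^2)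
      + (∫ θ in δ..(π-δ), (z.eval (Real.cos θ))^2)
      + (∫ θ in (π-δ)..π, (z.eval (Real.cos θ))^2) := by
    rw [hIfdef, ← intervalIntegral.integral_add_adjacent_intervals (hint 0 δ) (hint δ π),
      ← intervalIntegral.integral_add_adjacent_intervals (hint δ (π-δ)) (hint (π-δ) π)]
    ring
  have hend1 : (∫ θ in (0:ℝ)..δ, (z.eval (Real.cos θ))^2) ≤ δ * M^2 := by
    calc (∫ θ in (0:ℝ)..δ, (z.eval (Real.cos θ))^2) ≤ ∫ _ in (0:ℝ)..δ, M^2 :=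
        intervalIntegral.integral_mono_on hδpos.le (hint 0 δ)
          (intervalIntegrable_const) (fun θ _ => hpw θ)
      _ = δ * M^2 := by simp [smul_eq_mul]
  have hend2 : (∫ θ in (π-δ)..π, (z.eval (Real.cos θ))^2) ≤ δ * M^2 := by
    calc (∫ θ in (π-δ)..π, (z.eval (Real.cos θ))^2) ≤ ∫ _ in (π-δ)..π, M^2 :=
        intervalIntegral.integral_mono_on (by linarith) (hint _ _)
          (intervalIntegrable_const) (fun θ _ => hpw θ)
      _ = δ * M^2 := by simp [smul_eq_mul]
  -- middle bound
  have hmid : (∫ θ in δ..(π-δ), (z.eval (Real.cos θ))^2) ≤ (8*P) * J := by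
    have step1 : (∫ θ in δ..(π-δ), (z.eval (Real.cos θ))^2)
        ≤ (8*P) * ∫ θ in δ..(π-δ), Real.sin θ * (z.eval (Real.cos θ))^2 := by
      rw [← intervalIntegral.integral_const_mul]
      refine intervalIntegral.integral_mono_on hδle1 (hint _ _)
        ((continuous_const.mul (Real.continuous_sin.mul hGc)).intervalIntegrable _ _)
        fun θ hθ => ?_
      have h1 : 1/(8*P) ≤ Real.sin θ := le_trans hsinδ (hsinlow θ hθ)
      have h2 : (0:ℝ) ≤ (z.eval (Real.cos θ))^2 := sq_nonneg _
      have h3 : (1:ℝ) ≤ (8*P) * Real.sin θ := by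
        rw [div_le_iff₀ (by positivity)] at h1
        linarith
      nlinarith
    have step2 : (∫ θ in δ..(π-δ), Real.sin θ * (z.eval (Real.cos θ))^2)
        = ∫ x in (Real.cos (π-δ))..(Real.cos δ), (z.eval x)^2 := by
      have hderiv : ∀ θ ∈ Set.uIcc δ (π-δ), HasDerivAt Real.cos (-Real.sin θ) θ :=
        fun θ _ => Real.hasDerivAt_cos θ
      have hsub := intervalIntegral.integral_comp_smul_deriv hderiv
        (Real.continuous_sin.neg.continuousOn) ((hzc.pow 2) : Continuous fun x => (z.eval x)^2)
      calc (∫ θ in δ..(π-δ), Real.sin θ * (z.eval (Real.cos θ))^2)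
          = - ∫ θ in δ..(π-δ), (-Real.sin θ) • ((fun x => (z.eval x)^2) ∘ Real.cos) θ := by
            rw [← intervalIntegral.integral_neg]
            congr 1
            funext θ
            simp only [Function.comp_apply, smul_eq_mul]
            ring
        _ = - ∫ x in (Real.cos δ)..(Real.cos (π-δ)), (z.eval x)^2 := by exact congrArg Neg.neg hsub
        _ = ∫ x in (Real.cos (π-δ))..(Real.cos δ), (z.eval x)^2 :=
            (intervalIntegral.integral_symm _ _).symm
    have step3 : (∫ x in (Real.cos (π-δ))..(Real.cos δ), (z.eval x)^2) ≤ J := by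
      refine intervalIntegral.integral_mono_interval (Real.neg_one_le_cos _)
        (Real.cos_le_cos_of_nonneg_of_le_pi hδpos.le (by linarith) hδle1)
        (Real.cos_le_one _) ?_ ((hzc.pow 2).intervalIntegrable _ _)
      filter_upwards with x using sq_nonneg _
    calc (∫ θ in δ..(π-δ), (z.eval (Real.cos θ))^2)
        ≤ (8*P) * ∫ θ in δ..(π-δ), Real.sin θ * (z.eval (Real.cos θ))^2 := step1
      _ = (8*P) * ∫ x in (Real.cos (π-δ))..(Real.cos δ), (z.eval x)^2 := by rw [step2]
      _ ≤ (8*P) * J := mul_le_mul_of_nonneg_left step3 (by positivity)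
  have key3 : If ≤ 2*δ*M^2 + (8*P) * J := by
    rw [hsplit]; linarith
  -- combine
  clear_value M L J S P If δ
  have main : M^2 ≤ 64/(3*π) * P^2 * J := by
    have e1 : π * M^2 ≤ P * (2 * If) := by
      calc π * M^2 ≤ π * (P * S) := mul_le_mul_of_nonneg_left key1 pi_pos.le
        _ = P * (π * S) := by ring
        _ ≤ P * (2 * If) := mul_le_mul_of_nonneg_left (by linarith [key2]) hP0.le
    have e2 : P * (2 * If) ≤ π/4 * M^2 + 16*P^2*J := by
      have h4 : 2*P*(2*δ*M^2 + (8*P)*J) = π/4 * M^2 + 16*P^2*J := by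
        rw [hδdef]; field_simp; ring
      have h5 := mul_le_mul_of_nonneg_left key3 (by positivity : (0:ℝ) ≤ 2*P)
      calc P * (2 * If) = 2*P*If := by ring
        _ ≤ 2*P*(2*δ*M^2 + (8*P)*J) := h5
        _ = π/4 * M^2 + 16*P^2*J := h4
    rw [show 64/(3*π) * P^2 * J = (64*P^2*J)/(3*π) by ring, le_div_iff₀ (by positivity)]
    linarith [e1, e2]
  -- conclude
  have hMfinal : M ≤ (256/(3*π)) * p^2 * L := by
    rcases eq_or_lt_of_le hM0 with hM | hM
    · rw [← hM]
      exact mul_nonneg (by positivity) hL0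
    · have h5 : M^2 ≤ 64/(3*π) * P^2 * (M * L) :=
        le_trans main (mul_le_mul_of_nonneg_left hJML (by positivity))
      have h5' : M * M ≤ M * (64/(3*π) * P^2 * L) := by
        calc M * M = M^2 := (sq M).symm
          _ ≤ 64/(3*π) * P^2 * (M * L) := h5
          _ = M * (64/(3*π) * P^2 * L) := by ring
      have h6 : M ≤ 64/(3*π) * P^2 * L := (mul_le_mul_iff_right₀ hM).mp h5'
      have h7 : P^2 ≤ 4 * p^2 := by
        have h1 : (1:ℝ) ≤ (p:ℝ) := by exact_mod_cast hp
        have h2 : P ≤ 2*p := by rw [hPdef]; linarith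
        nlinarith [hP0.le]
      have hc : (0:ℝ) < 64/(3*π) := by positivity
      calc M ≤ 64/(3*π) * P^2 * L := h6
        _ ≤ 64/(3*π) * (4*p^2) * L :=
            mul_le_mul_of_nonneg_right (mul_le_mul_of_nonneg_left h7 hc.le) hL0
        _ = (256/(3*π)) * p^2 * L := by ring
  intro x hx
  exact le_trans (hmax x hx) hMfinal

end Nik

/-- Nikolskii-type `L¹`–`L∞` inverse inequality for univariate polynomials: there is an
absolute constant `C > 0` such that for every `p ≥ 1`, every `h > 0` and every polynomial
`z` of degree at most `p`, `‖z‖_{L∞(0,h)} ≤ C p² h⁻¹ ‖z‖_{L¹(0,h)}`. -/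
theorem stmt8 :
    ∃ C : ℝ, 0 < C ∧
      ∀ (p : ℕ), 1 ≤ p → ∀ (h : ℝ), 0 < h → ∀ z : Polynomial ℝ, z.natDegree ≤ p →
        ∀ x ∈ Set.Icc (0 : ℝ) h,
          |z.eval x| ≤ C * (p : ℝ) ^ 2 * h⁻¹ * ∫ t in (0 : ℝ)..h, |z.eval t| := by
  refine ⟨512/(3*Real.pi), by positivity, ?_⟩
  intro p hp h hh z hz x hx
  have hh2 : (h/2 : ℝ) ≠ 0 := by positivity
  set q := z.comp (Polynomial.C (h/2) * (Polynomial.X + Polynomial.C 1)) with hq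
  have hqdeg : q.natDegree ≤ p := by
    rw [hq, Polynomial.natDegree_comp, Polynomial.natDegree_C_mul hh2,
      Polynomial.natDegree_X_add_C, mul_one]
    exact hz
  have hqeval : ∀ t : ℝ, q.eval t = z.eval (h/2 * (t+1)) := by
    intro t
    rw [hq, Polynomial.eval_comp]
    simp
  set t0 := 2*x/h - 1 with ht0def
  have hx1 := hx.1
  have hx2 := hx.2
  have ht0 : t0 ∈ Set.Icc (-1:ℝ) 1 := by
    constructor
    · have : 0 ≤ 2*x/h := div_nonneg (by linarith) hh.le
      rw [ht0def]; linarith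
    · have : 2*x/h ≤ 2 := by rw [div_le_iff₀ hh]; linarith
      rw [ht0def]; linarith
  have hx' : z.eval x = q.eval t0 := by
    rw [hqeval]
    congr 1
    rw [ht0def]
    field_simp
    ring
  have hchg : (∫ t in (-1:ℝ)..1, |q.eval t|) = (h/2)⁻¹ * ∫ u in (0:ℝ)..h, |z.eval u| := by
    calc (∫ t in (-1:ℝ)..1, |q.eval t|)
        = ∫ t in (-1:ℝ)..1, (fun u => |z.eval u|) (h/2 * t + h/2) := by
          refine intervalIntegral.integral_congr fun t _ => ?_
          simp only [hqeval]
          ring_nf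
      _ = (h/2)⁻¹ * ∫ u in (0:ℝ)..h, |z.eval u| := by
          rw [intervalIntegral.integral_comp_mul_add (fun u => |Polynomial.eval u z|) hh2 (h/2)]
          norm_num [smul_eq_mul]
  calc |z.eval x| = |q.eval t0| := by rw [hx']
    _ ≤ (256/(3*Real.pi)) * p^2 * ∫ t in (-1:ℝ)..1, |q.eval t| := Nik.core p hp q hqdeg t0 ht0
    _ = 512/(3*Real.pi) * (p:ℝ)^2 * h⁻¹ * ∫ t in (0:ℝ)..h, |z.eval t| := by
        rw [hchg]
        field_simp
        ring
end
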